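/- arXiv:1609.06111 — 7 statements merged into one kernel-verified Lean document; each statement's English description precedes it below -/
import Mathlib

section
/- Let G be a d-degenerate graph with maximum degree Δ. Then the chromatic number of the square of G satisfies χ(G²) ≤ (2Δ+1)d + 1. -/
/-- A graph is `d`-degenerate if every induced subgraph (on a nonempty vertex set)
has a vertex of degree at most `d`. -/
def Degenerate {V : Type*} (G : SimpleGraph V) [DecidableRel G.Adj] (d : ℕ) : Prop :=
  ∀ s : Finset V, s.Nonempty → ∃ v ∈ s, (s.filter (fun u => G.Adj v u)).card ≤ d

/-- The square of a graph: `u` and `v` are adjacent iff their distance in `G` is 1 or 2. -/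
def square {V : Type*} (G : SimpleGraph V) : SimpleGraph V :=
  SimpleGraph.fromRel (fun u v => G.Adj u v ∨ ∃ w, G.Adj u w ∧ G.Adj w v)

open Finset

lemma degen_order {V : Type*} [DecidableEq V] (G : SimpleGraph V) [DecidableRel G.Adj]
    (d : ℕ) (hdeg : Degenerate G d) (s : Finset V) :
    ∃ f : V → ℕ, (∀ u ∈ s, f u < s.card) ∧ Set.InjOn f ↑s ∧
      ∀ v ∈ s, (s.filter (fun u => G.Adj v u ∧ f u < f v)).card ≤ d := by
  induction s using Finset.strongInduction with
  | _ s ih =>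
    rcases s.eq_empty_or_nonempty with rfl | hs
    · exact ⟨fun _ => 0, by simp, by simp, by simp⟩
    · obtain ⟨v, hv, hvd⟩ := hdeg s hs
      obtain ⟨f', h1, h2, h3⟩ := ih (s.erase v) (erase_ssubset hv)
      have hcard : s.card = (s.erase v).card + 1 := by
        have := card_pos.2 hs
        rw [card_erase_of_mem hv]; omega
      refine ⟨fun u => if u = v then (s.erase v).card else f' u, ?_, ?_, ?_⟩
      · intro u hu
        by_cases h : u = v
        · simp [h]; omega
        · simp only [if_neg h]
          have := h1 u (mem_erase.2 ⟨h, hu⟩)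
          omega
      · intro a ha b hb hab
        simp only at hab
        by_cases h : a = v <;> by_cases h' : b = v
        · rw [h, h']
        · rw [if_pos h, if_neg h'] at hab
          exact absurd hab.symm (Nat.ne_of_lt (h1 b (mem_erase.2 ⟨h', hb⟩)))
        · rw [if_neg h, if_pos h'] at hab
          exact absurd hab (Nat.ne_of_lt (h1 a (mem_erase.2 ⟨h, ha⟩)))
        · rw [if_neg h, if_neg h'] at hab
          exact h2 (mem_coe.2 (mem_erase.2 ⟨h, ha⟩)) (mem_coe.2 (mem_erase.2 ⟨h', hb⟩)) hab
      · intro x hx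
        by_cases h : x = v
        · subst h
          refine le_trans (card_le_card ?_) hvd
          intro u hu
          rw [mem_filter] at hu ⊢
          exact ⟨hu.1, hu.2.1⟩
        · have hxs' : x ∈ s.erase v := mem_erase.2 ⟨h, hx⟩
          have heq : s.filter (fun u => G.Adj x u ∧
              (if u = v then (s.erase v).card else f' u) < (if x = v then (s.erase v).card else f' x))
              = (s.erase v).filter (fun u => G.Adj x u ∧ f' u < f' x) := by
            ext u
            simp only [mem_filter, mem_erase, if_neg h]
            constructor
            · rintro ⟨hus, hadj, hlt⟩
              by_cases hu : u = v
              · rw [if_pos hu] at hlt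
                have := h1 x hxs'
                omega
              · rw [if_neg hu] at hlt
                exact ⟨⟨hu, hus⟩, hadj, hlt⟩
            · rintro ⟨⟨hu, hus⟩, hadj, hlt⟩
              rw [if_neg hu]
              exact ⟨hus, hadj, hlt⟩
          rw [heq]
          exact h3 x hxs'

lemma colorable_of_degenerate {V : Type*} [Fintype V] [DecidableEq V]
    (H : SimpleGraph V) [DecidableRel H.Adj] (k : ℕ) (h : Degenerate H k) :
    H.Colorable (k + 1) := by
  have key : ∀ s : Finset V, ∃ c : V → Fin (k + 1),
      ∀ x ∈ s, ∀ y ∈ s, H.Adj x y → c x ≠ c y := by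
    intro s
    induction s using Finset.strongInduction with
    | _ s ih =>
      rcases s.eq_empty_or_nonempty with rfl | hs
      · exact ⟨fun _ => 0, by simp⟩
      · obtain ⟨v, hv, hvd⟩ := h s hs
        obtain ⟨c', hc'⟩ := ih (s.erase v) (erase_ssubset hv)
        have himg : (((s.erase v).filter (fun u => H.Adj v u)).image c').card < k + 1 := by
          calc (((s.erase v).filter (fun u => H.Adj v u)).image c').card
              ≤ ((s.erase v).filter (fun u => H.Adj v u)).card := card_image_le
            _ ≤ (s.filter (fun u => H.Adj v u)).card :=
                card_le_card (filter_subset_filter _ (erase_subset _ _))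
            _ ≤ k := hvd
            _ < k + 1 := Nat.lt_succ_self k
        have hne : ((((s.erase v).filter (fun u => H.Adj v u)).image c')ᶜ).Nonempty := by
          rw [← card_pos, card_compl]
          have : Fintype.card (Fin (k + 1)) = k + 1 := Fintype.card_fin _
          omega
        obtain ⟨a, ha'⟩ := hne
        have ha := mem_compl.1 ha'
        refine ⟨fun u => if u = v then a else c' u, ?_⟩
        intro x hx y hy hadj
        by_cases h1 : x = v <;> by_cases h2 : y = v
        · exact absurd (h1.trans h2.symm) hadj.ne
        · simp only [if_pos h1, if_neg h2]
          intro hcon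
          rw [h1] at hadj
          exact ha (mem_image.2 ⟨y, mem_filter.2 ⟨mem_erase.2 ⟨h2, hy⟩, hadj⟩, hcon.symm⟩)
        · simp only [if_neg h1, if_pos h2]
          intro hcon
          rw [h2] at hadj
          exact ha (mem_image.2 ⟨x, mem_filter.2 ⟨mem_erase.2 ⟨h1, hx⟩, hadj.symm⟩, hcon⟩)
        · simp only [if_neg h1, if_neg h2]
          exact hc' x (mem_erase.2 ⟨h1, hx⟩) y (mem_erase.2 ⟨h2, hy⟩) hadj
  obtain ⟨c, hc⟩ := key univ
  exact ⟨SimpleGraph.Coloring.mk c fun hadj => hc _ (mem_univ _) _ (mem_univ _) hadj⟩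

lemma square_degenerate {V : Type*} [Fintype V] [DecidableEq V]
    (G : SimpleGraph V) [DecidableRel G.Adj] (d Δ : ℕ)
    [DecidableRel (square G).Adj]
    (hdeg : Degenerate G d) (hΔ : G.maxDegree ≤ Δ) :
    Degenerate (square G) ((2 * Δ + 1) * d) := by
  obtain ⟨f, -, hinj, hback⟩ := degen_order G d hdeg univ
  have hinj' : Function.Injective f := fun a b hab =>
    hinj (mem_coe.2 (mem_univ a)) (mem_coe.2 (mem_univ b)) hab
  intro s hs
  obtain ⟨v, hv, hmax⟩ := s.exists_max_image f hs
  refine ⟨v, hv, ?_⟩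
  set A := univ.filter (fun u => G.Adj v u ∧ f u < f v) with hA
  set B := A.biUnion (fun w => G.neighborFinset w) with hB
  set C := (G.neighborFinset v).biUnion
      (fun w => univ.filter (fun u => G.Adj w u ∧ f u < f w)) with hC
  have hsub : s.filter (fun u => (square G).Adj v u) ⊆ A ∪ B ∪ C := by
    intro u hu
    rw [mem_filter] at hu
    obtain ⟨hus, hadj⟩ := hu
    rw [square, SimpleGraph.fromRel_adj] at hadj
    obtain ⟨hne, hrel⟩ := hadj
    have hflt : f u < f v := by
      have h1 := hmax u hus
      have : f u ≠ f v := fun hcon => hne (hinj' hcon).symm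
      omega
    have hrel' : G.Adj v u ∨ ∃ w, G.Adj v w ∧ G.Adj w u := by
      rcases hrel with (h | h) | (h | h)
      · exact Or.inl h
      · obtain ⟨w, h1, h2⟩ := h; exact Or.inr ⟨w, h1, h2⟩
      · exact Or.inl h.symm
      · obtain ⟨w, h1, h2⟩ := h; exact Or.inr ⟨w, h2.symm, h1.symm⟩
    rcases hrel' with h | ⟨w, hvw, hwu⟩
    · exact mem_union_left _ (mem_union_left _ (mem_filter.2 ⟨mem_univ _, h, hflt⟩))
    · by_cases hw : f w < f v
      · refine mem_union_left _ (mem_union_right _ ?_)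
        exact mem_biUnion.2 ⟨w, mem_filter.2 ⟨mem_univ _, hvw, hw⟩,
          (SimpleGraph.mem_neighborFinset _ _ _).2 hwu⟩
      · refine mem_union_right _ ?_
        have hwv : f v < f w := by
          have : f w ≠ f v := fun hcon => hvw.ne' (hinj' hcon)
          omega
        exact mem_biUnion.2 ⟨w, (SimpleGraph.mem_neighborFinset _ _ _).2 hvw,
          mem_filter.2 ⟨mem_univ _, hwu, by omega⟩⟩
  have hAd : A.card ≤ d := hback v (mem_univ v)
  have hBd : B.card ≤ d * Δ := by
    calc B.card ≤ ∑ w ∈ A, (G.neighborFinset w).card := card_biUnion_le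
      _ ≤ A.card * Δ := by
          apply sum_le_card_nsmul
          intro w _
          rw [G.card_neighborFinset_eq_degree]
          exact le_trans (G.degree_le_maxDegree w) hΔ
      _ ≤ d * Δ := Nat.mul_le_mul_right _ hAd
  have hCd : C.card ≤ Δ * d := by
    calc C.card ≤ ∑ w ∈ G.neighborFinset v,
          (univ.filter (fun u => G.Adj w u ∧ f u < f w)).card := card_biUnion_le
      _ ≤ (G.neighborFinset v).card * d := by
          apply sum_le_card_nsmul
          intro w _
          exact hback w (mem_univ w)
      _ ≤ Δ * d := by
          apply Nat.mul_le_mul_right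
          rw [G.card_neighborFinset_eq_degree]
          exact le_trans (G.degree_le_maxDegree v) hΔ
  calc (s.filter (fun u => (square G).Adj v u)).card
      ≤ (A ∪ B ∪ C).card := card_le_card hsub
    _ ≤ A.card + B.card + C.card :=
        le_trans (card_union_le _ _) (Nat.add_le_add_right (card_union_le _ _) _)
    _ ≤ d + d * Δ + Δ * d := by omega
    _ = (2 * Δ + 1) * d := by ring

/-- if `G` is `d`-degenerate with maximum degree `Δ`, then
`χ(G²) ≤ (2Δ+1)d + 1`. -/
theorem chromatic_square_le {V : Type*} [Fintype V] [DecidableEq V]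
    (G : SimpleGraph V) [DecidableRel G.Adj] (d Δ : ℕ)
    (hdeg : Degenerate G d) (hΔ : G.maxDegree ≤ Δ) :
    (square G).chromaticNumber ≤ ((2 * Δ + 1) * d + 1 : ℕ) := by
  letI : DecidableRel (square G).Adj := Classical.decRel _
  have hdg := square_degenerate G d Δ hdeg hΔ
  have hcol := colorable_of_degenerate (square G) ((2 * Δ + 1) * d) hdg
  exact hcol.chromaticNumber_le
end

section
/- For each k, let G_k be the 2-degenerate graph obtained from the complete graph K_k by replacing each edge with k parallel edges and then subdividing every edge (inserting a new vertex of degree 2 on each edge). Then G_k has k + k·C(k,2) < k³ vertices, is 2-degenerate, and us(G_k) ≥ k. Consequently, for every n there is a 2-degenerate graph G on at most n vertices with us(G) > n^{1/3} (for n of the form k³). -/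
/-- A unique-superior coloring. -/
def IsUSColoring {V : Type*} (G : SimpleGraph V) (c : V → ℕ) : Prop :=
  (∀ u v, G.Adj u v → c u ≠ c v) ∧
  (∀ u v w, G.Adj u v → G.Adj v w → u ≠ w → c u = c w → c u < c v)

/-- The unique-superior chromatic number. -/
noncomputable def usNumber {V : Type*} (G : SimpleGraph V) : ℕ :=
  sInf {m | ∃ c : V → ℕ, IsUSColoring G c ∧ ∀ v, c v ∈ Finset.Icc 1 m}

/-- The vertex set of `G_k`: the `k` original vertices of `K_k`, together with one
subdivision vertex for each of the `k` parallel copies of each edge of `K_k`. -/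
abbrev GkVert (k : ℕ) := Fin k ⊕ ({p : Fin k × Fin k // p.1 < p.2} × Fin k)

/-- The graph `G_k`: take `K_k`, replace each edge by `k` parallel edges, and
subdivide every edge; a subdivision vertex is joined exactly to the two endpoints
of its edge. -/
def Gk (k : ℕ) : SimpleGraph (GkVert k) :=
  SimpleGraph.fromRel (fun a b =>
    match a, b with
    | Sum.inl i, Sum.inr ⟨⟨p, _⟩, _⟩ => i = p.1 ∨ i = p.2
    | _, _ => False)

lemma card_pairs (k : ℕ) : Fintype.card {p : Fin k × Fin k // p.1 < p.2} = k.choose 2 := by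
  rw [Fintype.card_congr (Equiv.subtypeProdEquivSigmaSubtype (fun i j : Fin k => i < j)),
    Fintype.card_sigma]
  have h : ∀ i : Fin k, Fintype.card {j : Fin k // i < j} = k - 1 - i := by
    intro i
    rw [Fintype.card_subtype]
    have : Finset.filter (fun j => i < j) Finset.univ = Finset.Ioi i := by
      ext j; simp
    rw [this, Fin.card_Ioi]
  simp only [h]
  rw [Fin.sum_univ_eq_sum_range, Nat.choose_two_right,
    Finset.sum_range_reflect (fun i => i) k, Finset.sum_range_id]

lemma adj_inl_inr {k : ℕ} (i : Fin k) (p : {p : Fin k × Fin k // p.1 < p.2}) (t : Fin k) :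
    (Gk k).Adj (Sum.inl i) (Sum.inr (p, t)) ↔ (i = p.1.1 ∨ i = p.1.2) := by
  obtain ⟨⟨p, hp⟩⟩ := p
  simp [Gk, SimpleGraph.fromRel_adj]

lemma adj_inr {k : ℕ} (p : {p : Fin k × Fin k // p.1 < p.2}) (t : Fin k)
    (u : GkVert k)
    (h : (Gk k).Adj (Sum.inr (p, t)) u) : u = Sum.inl p.1.1 ∨ u = Sum.inl p.1.2 := by
  obtain ⟨⟨p, hp⟩⟩ := p
  cases u with
  | inl j => simp [Gk, SimpleGraph.fromRel_adj] at h; tauto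
  | inr x => simp [Gk, SimpleGraph.fromRel_adj] at h

lemma not_adj_inl_inl {k : ℕ} (i j : Fin k) : ¬ (Gk k).Adj (Sum.inl i) (Sum.inl j) := by
  simp [Gk, SimpleGraph.fromRel_adj]

lemma choose_two_mul_two (k : ℕ) : k.choose 2 * 2 = k * (k - 1) := by
  rw [Nat.choose_two_right, Nat.div_mul_cancel]
  rcases Nat.even_or_odd k with h | h
  · exact Dvd.dvd.mul_right h.two_dvd _
  · exact Dvd.dvd.mul_left (Nat.Odd.sub_odd h odd_one).two_dvd _

/-- Every unique-superior coloring of `G_k` with colors in `[1, m]` requires `m ≥ k`. -/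
lemma key_bound {k m : ℕ} (hk : 2 ≤ k) (c : GkVert k → ℕ)
    (hc : IsUSColoring (Gk k) c) (hm : ∀ v, c v ∈ Finset.Icc 1 m) : k ≤ m := by
  obtain ⟨hproper, hus⟩ := hc
  have hcard : ∀ f : Fin k → GkVert k, (∀ a b, c (f a) = c (f b) → a = b) → k ≤ m := by
    intro f hinj
    calc k = (Finset.univ : Finset (Fin k)).card := by simp
    _ ≤ (Finset.Icc 1 m).card := by
        apply Finset.card_le_card_of_injOn (fun t => c (f t)) (fun t _ => hm (f t))
        intro a _ b _ hab
        exact hinj a b hab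
    _ = m := by rw [Nat.card_Icc]; omega
  by_cases hinj : Function.Injective (fun i : Fin k => c (Sum.inl i))
  · exact hcard (fun i => Sum.inl i) (fun a b h => hinj h)
  · simp only [Function.Injective, not_forall] at hinj
    obtain ⟨i, j, hcij, hij⟩ := hinj
    -- wlog i < j
    wlog hlt : i < j generalizing i j
    · exact this j i hcij.symm (Ne.symm hij) (by omega)
    set p : {p : Fin k × Fin k // p.1 < p.2} := ⟨(i, j), hlt⟩ with hp
    have hai : ∀ t, (Gk k).Adj (Sum.inl i) (Sum.inr (p, t)) := fun t =>
      (adj_inl_inr i p t).mpr (Or.inl rfl)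
    have haj : ∀ t, (Gk k).Adj (Sum.inl j) (Sum.inr (p, t)) := fun t =>
      (adj_inl_inr j p t).mpr (Or.inr rfl)
    -- c (inl i) < c (inr (p, t)) for all t
    have hlow : ∀ t, c (Sum.inl i) < c (Sum.inr (p, t)) := fun t =>
      hus (Sum.inl i) (Sum.inr (p, t)) (Sum.inl j) (hai t) ((haj t).symm)
        (by simp [hij]) hcij
    apply hcard (fun t => Sum.inr (p, t))
    intro a b hab
    by_contra hne
    have hne' : (Sum.inr (p, a) : GkVert k) ≠ Sum.inr (p, b) := by
      simp [hne]
    have h1 : c (Sum.inr (p, a)) < c (Sum.inl i) :=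
      hus (Sum.inr (p, a)) (Sum.inl i) (Sum.inr (p, b)) ((hai a).symm) (hai b) hne' hab
    exact absurd (hlow a) (by omega)

open scoped Classical in
/-- `G_k` has `k + k·C(k,2) < k³` vertices, is 2-degenerate, and
`us(G_k) ≥ k`; consequently `us(G_k) > n^{1/3}` where `n` is its number of vertices. -/
theorem us_lower_bound_degenerate (k : ℕ) (hk : 2 ≤ k) :
    Fintype.card (GkVert k) = k + k * Nat.choose k 2 ∧
    Fintype.card (GkVert k) < k ^ 3 ∧
    Degenerate (Gk k) 2 ∧
    k ≤ usNumber (Gk k) ∧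
    (Fintype.card (GkVert k) : ℝ) ^ ((1 : ℝ) / 3) < (usNumber (Gk k) : ℝ) := by
  have hcard : Fintype.card (GkVert k) = k + k * Nat.choose k 2 := by
    simp [GkVert, Fintype.card_sum, Fintype.card_prod, card_pairs, Nat.mul_comm]
  have hc2 : k.choose 2 * 2 = k * (k - 1) := choose_two_mul_two k
  have hlt : Fintype.card (GkVert k) < k ^ 3 := by
    rw [hcard]
    have h3 : k ^ 3 = k * k * k := by ring
    nlinarith [hc2, hk, Nat.sub_add_cancel (by omega : 1 ≤ k)]
  have hdeg : Degenerate (Gk k) 2 := by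
    intro s hs
    by_cases h : ∃ x ∈ s, ∃ p t, x = Sum.inr (p, t)
    · obtain ⟨x, hxs, p, t, rfl⟩ := h
      refine ⟨Sum.inr (p, t), hxs, ?_⟩
      calc (s.filter (fun u => (Gk k).Adj (Sum.inr (p, t)) u)).card
          ≤ ({Sum.inl p.1.1, Sum.inl p.1.2} : Finset (GkVert k)).card := by
            apply Finset.card_le_card
            intro u hu
            simp only [Finset.mem_filter] at hu
            simpa using adj_inr p t u hu.2
        _ ≤ 2 := Finset.card_le_two
    · obtain ⟨v, hv⟩ := hs
      refine ⟨v, hv, ?_⟩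
      have : s.filter (fun u => (Gk k).Adj v u) = ∅ := by
        rw [Finset.filter_eq_empty_iff]
        intro u hus hadj
        push_neg at h
        cases v with
        | inl i =>
          cases u with
          | inl j => exact not_adj_inl_inl i j hadj
          | inr x => exact h (Sum.inr x) hus x.1 x.2 (by simp)
        | inr x => exact h (Sum.inr x) hv x.1 x.2 (by simp)
      simp [this]
  have husC : IsUSColoring (Gk k)
      (fun v => ((Fintype.equivFin (GkVert k)) v).val + 1) := by
    constructor
    · intro u v huv hcc
      apply huv.ne
      apply (Fintype.equivFin (GkVert k)).injective
      have hcc' : ((Fintype.equivFin (GkVert k)) u).val + 1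
          = ((Fintype.equivFin (GkVert k)) v).val + 1 := hcc
      exact Fin.val_injective (Nat.add_right_cancel hcc')
    · intro u v w _ _ huw hcc
      have hcc' : ((Fintype.equivFin (GkVert k)) u).val + 1
          = ((Fintype.equivFin (GkVert k)) w).val + 1 := hcc
      exact absurd ((Fintype.equivFin (GkVert k)).injective
        (Fin.val_injective (Nat.add_right_cancel hcc'))) huw
  have hne : {m | ∃ c : GkVert k → ℕ, IsUSColoring (Gk k) c ∧
      ∀ v, c v ∈ Finset.Icc 1 m}.Nonempty := by
    refine ⟨Fintype.card (GkVert k), _, husC, fun v => ?_⟩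
    simp only [Finset.mem_Icc]
    exact ⟨Nat.le_add_left 1 _, ((Fintype.equivFin (GkVert k)) v).isLt⟩
  have hus : k ≤ usNumber (Gk k) := by
    have hmem := Nat.sInf_mem hne
    obtain ⟨c, hc, hmc⟩ := hmem
    exact key_bound hk c hc hmc
  refine ⟨hcard, hlt, hdeg, hus, ?_⟩
  have husp : 0 < usNumber (Gk k) := by omega
  have h1 : (Fintype.card (GkVert k) : ℝ) < (usNumber (Gk k) : ℝ) ^ (3 : ℕ) := by
    calc (Fintype.card (GkVert k) : ℝ) < (k : ℝ) ^ (3 : ℕ) := by exact_mod_cast hlt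
    _ ≤ (usNumber (Gk k) : ℝ) ^ (3 : ℕ) := by
        apply pow_le_pow_left₀ (by positivity)
        exact_mod_cast hus
  calc (Fintype.card (GkVert k) : ℝ) ^ ((1 : ℝ) / 3)
      < ((usNumber (Gk k) : ℝ) ^ (3 : ℕ)) ^ ((1 : ℝ) / 3) := by
        apply Real.rpow_lt_rpow (by positivity) h1 (by norm_num)
    _ = (usNumber (Gk k) : ℝ) := by
        rw [← Real.rpow_natCast ((usNumber (Gk k) : ℝ)) 3, ← Real.rpow_mul (by positivity)]
        norm_num
end

section
/- Let T_k be the complete k-ary rooted tree of height k−1 (every non-leaf has exactly k children and all leaves are at distance k−1 from the root). Then for any unique-superior coloring of T_k with exactly k colors, for every 1 ≤ i ≤ k, color i is only used on vertices belonging to the bottom i levels (i.e., vertices at distance at least k−i from the root). -/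
/-- The vertices of the complete `k`-ary tree of height `k-1`: a vertex at level
`i` (distance `i` from the root) is a sequence of `i` child-choices in `Fin k`. -/
abbrev TreeVert (k : ℕ) := Σ i : Fin k, (Fin i.val → Fin k)

/-- The complete `k`-ary rooted tree of height `k-1`: every non-leaf has exactly
`k` children; a vertex is adjacent to another iff one is the parent of the other
(extending the sequence by one choice). -/
def Tk (k : ℕ) : SimpleGraph (TreeVert k) :=
  SimpleGraph.fromRel (fun u v =>
    ∃ h : v.1.val = u.1.val + 1,
      ∀ t : Fin u.1.val, v.2 (Fin.cast h.symm t.castSucc) = u.2 t)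

/-!
Induct upwards from the leaves: suppose every child of a vertex `v` at level `l` has color at
least `k - l - 1`. If `c v ≤ k - l - 1`, all `k` children of `v` have color greater than `c v`,
and by unique-superiority no two of them share a color, since their common color would have to
be smaller than `c v`. So `k` distinct colors fit into `(c v, k]`, forcing `c v = 0`.
-/

open Function

namespace TreeVert

variable {k : ℕ}

def child (v : TreeVert k) (h : v.1.val + 1 < k) (j : Fin k) : TreeVert k :=
  ⟨⟨v.1.val + 1, h⟩, Fin.snoc (α := fun _ => Fin k) v.2 j⟩

theorem level_child (v : TreeVert k) (h : v.1.val + 1 < k) (j : Fin k) :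
    (v.child h j).1.val = v.1.val + 1 :=
  rfl

theorem adj_child (v : TreeVert k) (h : v.1.val + 1 < k) (j : Fin k) :
    (Tk k).Adj v (v.child h j) := by
  rw [Tk, SimpleGraph.fromRel_adj]
  refine ⟨fun e => ?_, Or.inl ⟨rfl, fun t => ?_⟩⟩
  · have := congrArg (fun x : TreeVert k => x.1.val) e
    simp [child] at this
  · simp [child]

theorem child_injective (v : TreeVert k) (h : v.1.val + 1 < k) : Injective (v.child h) := by
  intro j j' e
  have e₂ : (v.child h j).2 = (v.child h j').2 := eq_of_heq (Sigma.mk.inj e).2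
  simpa [child] using congrFun e₂ (Fin.last _)

end TreeVert

namespace IsUSColoring

variable {V ι : Type*} {G : SimpleGraph V} {c : V → ℕ}

theorem injective_comp_of_lt {v : V} {f : ι → V} (hc : IsUSColoring G c) (hf : Injective f)
    (hadj : ∀ i, G.Adj v (f i)) (hlt : ∀ i, c v < c (f i)) : Injective (c ∘ f) := by
  intro i j e
  by_contra hij
  exact (hlt i).not_gt (hc.2 _ v _ (hadj i).symm (hadj j) (hf.ne hij) e)

theorem card_le_sub_of_lt [Fintype ι] {v : V} {f : ι → V} {k : ℕ} (hc : IsUSColoring G c)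
    (hf : Injective f) (hadj : ∀ i, G.Adj v (f i)) (hlt : ∀ i, c v < c (f i))
    (hle : ∀ i, c (f i) ≤ k) : Fintype.card ι ≤ k - c v := by
  rw [← Nat.card_Ioc, ← Finset.card_univ]
  refine Finset.card_le_card_of_injOn (c ∘ f) (fun i _ => ?_)
    (hc.injective_comp_of_lt hf hadj hlt).injOn
  simpa using ⟨hlt i, hle i⟩

end IsUSColoring

theorem IsUSColoring.sub_le_level_of_children {k : ℕ} {c : TreeVert k → ℕ}
    (hc : IsUSColoring (Tk k) c) (hrange : ∀ v, c v ∈ Finset.Icc 1 k) (v : TreeVert k)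
    (h : v.1.val + 1 < k) (hchild : ∀ j, k - c (v.child h j) ≤ v.1.val + 1) :
    k - c v ≤ v.1.val := by
  by_contra! hv
  have hlt : ∀ j, c v < c (v.child h j) := fun j =>
    lt_of_le_of_ne (by have := hchild j; omega) (hc.1 _ _ (v.adj_child h j))
  have hcard := hc.card_le_sub_of_lt (v.child_injective h) (v.adj_child h) hlt
    fun j => (Finset.mem_Icc.mp (hrange _)).2
  have hpos := (Finset.mem_Icc.mp (hrange v)).1
  rw [Fintype.card_fin] at hcard
  omega

theorem us_coloring_Tk_levels_general (k : ℕ) (c : TreeVert k → ℕ)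
    (hc : IsUSColoring (Tk k) c) (hrange : ∀ v, c v ∈ Finset.Icc 1 k) :
    ∀ v : TreeVert k, k - c v ≤ v.1.val := by
  intro v
  induction hn : k - 1 - v.1.val generalizing v with
  | zero =>
    have := (Finset.mem_Icc.mp (hrange v)).1
    omega
  | succ n ih =>
    have h : v.1.val + 1 < k := by omega
    exact hc.sub_le_level_of_children hrange v h fun j =>
      ih _ (by rw [TreeVert.level_child]; omega)

/-- in any unique-superior coloring of `T_k` with the `k` colors
`{1,…,k}`, each color `i` appears only on the bottom `i` levels, i.e. each vertex
`v` (at level `v.1`) satisfies `k - c v ≤ level(v)`. -/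
theorem us_coloring_Tk_levels (k : ℕ) (hk : 1 ≤ k) (c : TreeVert k → ℕ)
    (hc : IsUSColoring (Tk k) c) (hrange : ∀ v, c v ∈ Finset.Icc 1 k) :
    ∀ v : TreeVert k, k - c v ≤ v.1.val :=
  us_coloring_Tk_levels_general k c hc hrange
end

section
/- Let T_k be the complete k-ary rooted tree of height k−1. Then us(T_k) = k. In particular, since T_k has (k^k − 1)/(k − 1) vertices, there exist trees T on n vertices with us(T) = Ω(log n / log log n). -/
namespace USAux

abbrev rel (k : ℕ) (u v : TreeVert k) : Prop :=
  ∃ h : v.1.val = u.1.val + 1,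
    ∀ t : Fin u.1.val, v.2 (Fin.cast h.symm t.castSucc) = u.2 t

lemma tk_adj {k : ℕ} {u v : TreeVert k} :
    (Tk k).Adj u v ↔ u ≠ v ∧ (rel k u v ∨ rel k v u) := by
  simp [Tk, SimpleGraph.fromRel_adj, rel]

/-- A parent is uniquely determined. -/
lemma parent_unique {k : ℕ} {u w v : TreeVert k}
    (h1 : rel k u v) (h2 : rel k w v) : u = w := by
  obtain ⟨⟨a, ha⟩, f⟩ := u
  obtain ⟨⟨b, hb⟩, g⟩ := w
  obtain ⟨e1, H1⟩ := h1
  obtain ⟨e2, H2⟩ := h2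
  have e1' : v.1.val = a + 1 := e1
  have e2' : v.1.val = b + 1 := e2
  have hab : a = b := by omega
  subst hab
  have hfg : f = g := by
    funext t
    exact (H1 t).symm.trans (H2 t)
  subst hfg
  rfl

lemma adj_child {k i : ℕ} (hi : i + 1 < k) (f : Fin i → Fin k) (j : Fin k) :
    (Tk k).Adj ⟨⟨i, Nat.lt_of_succ_lt hi⟩, f⟩ ⟨⟨i + 1, hi⟩, Fin.snoc f j⟩ := by
  rw [tk_adj]
  refine ⟨?_, Or.inl ⟨rfl, fun t => ?_⟩⟩
  · intro h
    have := congrArg (fun v : TreeVert k => v.1.val) h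
    simp at this
  · show (Fin.snoc f j : Fin (i+1) → Fin k) t.castSucc = f t
    exact @Fin.snoc_castSucc i (fun _ => Fin k) j f ⟨t.val, t.isLt⟩

lemma descent {k m : ℕ} (c : TreeVert k → ℕ)
    (hUS : IsUSColoring (Tk k) c) (hmem : ∀ v, c v ∈ Finset.Icc 1 m)
    (hm : m < k) :
    ∀ i, ∀ hi : i < k, ∃ f : Fin i → Fin k, c ⟨⟨i, hi⟩, f⟩ + i ≤ m := by
  intro i
  induction i with
  | zero =>
      intro hi
      refine ⟨Fin.elim0, ?_⟩
      have := (Finset.mem_Icc.mp (hmem ⟨⟨0, hi⟩, Fin.elim0⟩)).2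
      omega
  | succ i ih =>
      intro hi
      obtain ⟨f, hf⟩ := ih (Nat.lt_of_succ_lt hi)
      set P : TreeVert k := ⟨⟨i, Nat.lt_of_succ_lt hi⟩, f⟩ with hP
      set φ : Fin k → ℕ := fun j => c ⟨⟨i + 1, hi⟩, Fin.snoc f j⟩ with hφ
      have hninj : ¬ Function.Injective φ := by
        intro hinj
        have hinj' : Function.Injective
            (fun j => (⟨φ j, hmem _⟩ : (Finset.Icc 1 m : Finset ℕ))) := by
          intro a b hab
          exact hinj (congrArg Subtype.val hab)
        have hcard := Fintype.card_le_of_injective _ hinj'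
        simp [Fintype.card_coe, Nat.card_Icc] at hcard
        omega
      rw [Function.not_injective_iff] at hninj
      obtain ⟨j, j', heq, hne⟩ := hninj
      have hvne : (⟨⟨i + 1, hi⟩, Fin.snoc f j⟩ : TreeVert k) ≠
          ⟨⟨i + 1, hi⟩, Fin.snoc f j'⟩ := by
        intro h
        apply hne
        have h2 : (Fin.snoc f j : Fin (i+1) → Fin k) = Fin.snoc f j' := by
          have := (Sigma.mk.inj_iff.mp h).2
          exact eq_of_heq this
        have := congrFun h2 (Fin.last i)
        simpa [Fin.snoc_last] using this
      have hlt := hUS.2 _ P _ ((adj_child hi f j).symm) (adj_child hi f j')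
        hvne heq
      exact ⟨Fin.snoc f j, by omega⟩

end USAux

/-- `us(T_k) = k`, and `T_k` has `(k^k − 1)/(k − 1)` vertices
(hence trees achieve us-number `Ω(log n / log log n)`). -/
theorem usNumber_Tk (k : ℕ) (hk : 2 ≤ k) :
    usNumber (Tk k) = k ∧
    Fintype.card (TreeVert k) = (k ^ k - 1) / (k - 1) := by
  constructor
  · -- the upper-bound coloring
    have hkS : k ∈ {m | ∃ c : TreeVert k → ℕ,
        IsUSColoring (Tk k) c ∧ ∀ v, c v ∈ Finset.Icc 1 m} := by
      refine ⟨fun v => k - v.1.val, ⟨?_, ?_⟩, ?_⟩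
      · intro u v huv
        rw [USAux.tk_adj] at huv
        have hu := u.1.isLt
        have hv := v.1.isLt
        rcases huv.2 with ⟨h, -⟩ | ⟨h, -⟩ <;> simp only <;> omega
      · intro u v w huv hvw hne hcw
        have hu := u.1.isLt
        have hv := v.1.isLt
        have hw := w.1.isLt
        simp only at hcw ⊢
        have hlev : u.1.val = w.1.val := by omega
        rw [USAux.tk_adj] at huv hvw
        rcases huv.2 with h1 | h1 <;> rcases hvw.2 with h2 | h2
        · -- v extends u and w extends v: levels u, u+1, u+2: impossible
          obtain ⟨e1, -⟩ := h1; obtain ⟨e2, -⟩ := h2; omega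
        · -- v extends u and v extends w : u = w, contradiction
          exact absurd (USAux.parent_unique h1 h2) hne
        · -- u extends v and v extends w: impossible by levels
          obtain ⟨e1, -⟩ := h1; obtain ⟨e2, -⟩ := h2; omega
        · -- u extends v, w extends v : v is parent, level v = level u - 1
          obtain ⟨e1, -⟩ := h1
          omega
      · rintro ⟨⟨iv, hiv⟩, fv⟩
        rw [Finset.mem_Icc]
        constructor <;> simp only <;> omega
    refine le_antisymm (Nat.sInf_le hkS) (le_csInf ⟨k, hkS⟩ ?_)
    rintro m ⟨c, hUS, hmem⟩
    by_contra hlt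
    push_neg at hlt
    obtain ⟨f, hf⟩ := USAux.descent c hUS hmem hlt (k - 1) (by omega)
    have h1 := (Finset.mem_Icc.mp (hmem ⟨⟨k - 1, by omega⟩, f⟩)).1
    omega
  · rw [Fintype.card_sigma]
    have : ∀ i : Fin k, Fintype.card (Fin i.val → Fin k) = k ^ i.val := by
      intro i
      simp [Fintype.card_fun]
    simp only [this]
    rw [Fin.sum_univ_eq_sum_range (fun i => k ^ i) k]
    exact Nat.geomSum_eq hk k
end

section
/- Let T_k be the complete k-ary rooted tree of height k−1. Coloring every vertex at level i (distance i from the root) with color k − i is a unique-superior coloring of T_k with k colors; hence us(T_k) ≤ k. -/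
/-- A vertex has at most one parent: if `v` is a child of both `u` and `w`,
then `u = w`. -/
lemma parent_unique {k : ℕ} (u w v : TreeVert k)
    (h1 : ∃ h : v.1.val = u.1.val + 1,
      ∀ t : Fin u.1.val, v.2 (Fin.cast h.symm t.castSucc) = u.2 t)
    (h2 : ∃ h : v.1.val = w.1.val + 1,
      ∀ t : Fin w.1.val, v.2 (Fin.cast h.symm t.castSucc) = w.2 t) :
    u = w := by
  obtain ⟨⟨iu, hu⟩, fu⟩ := u
  obtain ⟨⟨iw, hw⟩, fw⟩ := w
  obtain ⟨⟨iv, hv⟩, fv⟩ := v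
  obtain ⟨e1, g1⟩ := h1
  obtain ⟨e2, g2⟩ := h2
  simp only at e1 e2 g1 g2
  obtain rfl : iu = iw := by omega
  congr 1
  funext t
  rw [← g1 t, ← g2 t]

/-- coloring each vertex at level `i` with color `k − i` is a
unique-superior coloring of `T_k` with colors in `{1,…,k}`; hence `us(T_k) ≤ k`. -/
theorem usNumber_Tk_le (k : ℕ) (hk : 1 ≤ k) :
    IsUSColoring (Tk k) (fun v => k - v.1.val) ∧
    (∀ v : TreeVert k, k - v.1.val ∈ Finset.Icc 1 k) ∧
    usNumber (Tk k) ≤ k := by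
  have hcol : IsUSColoring (Tk k) (fun v => k - v.1.val) := by
    constructor
    · intro u v huv
      obtain ⟨hne, hrel⟩ := huv
      have h1 := u.1.isLt
      have h2 := v.1.isLt
      rcases hrel with ⟨h, -⟩ | ⟨h, -⟩ <;> simp only <;> omega
    · intro u v w huv hvw hne heq
      obtain ⟨hne1, hrel1⟩ := huv
      obtain ⟨hne2, hrel2⟩ := hvw
      have h1 := u.1.isLt
      have h2 := v.1.isLt
      have h3 := w.1.isLt
      simp only at heq ⊢
      -- c u = c w implies levels equal
      rcases hrel1 with ⟨e1, g1⟩ | ⟨e1, g1⟩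
      · -- v is child of u: level v = level u + 1
        rcases hrel2 with ⟨e2, g2⟩ | ⟨e2, g2⟩
        · -- w is child of v: level w = level v + 1, contradicts c u = c w
          omega
        · -- v is child of w too: then u = w, contradiction
          exact absurd (parent_unique u w v ⟨e1, g1⟩ ⟨e2, g2⟩) hne
      · -- u is child of v: level v = level u - 1, c v > c u
        omega
  refine ⟨hcol, ?_, ?_⟩
  · intro v
    have := v.1.isLt
    simp only [Finset.mem_Icc]
    omega
  · apply Nat.sInf_le
    refine ⟨fun v => k - v.1.val, hcol, ?_⟩
    intro v
    have := v.1.isLt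
    simp only [Finset.mem_Icc]
    omega
end

section
/- Every planar graph G on n ≥ 1 vertices contains an independent set I of size at least n/8 such that every vertex of I has degree less than 12 in G. -/
/-- `H` is a minor of `G`. -/
def IsMinor {W V : Type*} (H : SimpleGraph W) (G : SimpleGraph V) : Prop :=
  ∃ f : W → Set V,
    (∀ w, (f w).Nonempty) ∧
    (∀ w, (G.induce (f w)).Connected) ∧
    (Pairwise fun w w' => Disjoint (f w) (f w')) ∧
    (∀ w w', H.Adj w w' → ∃ a ∈ f w, ∃ b ∈ f w', G.Adj a b)

/-- A graph is planar iff it has no `K₅` and no `K₃,₃` minor (Wagner's theorem). -/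
def IsPlanar {V : Type*} (G : SimpleGraph V) : Prop :=
  ¬ IsMinor (⊤ : SimpleGraph (Fin 5)) G ∧
  ¬ IsMinor (completeBipartiteGraph (Fin 3) (Fin 3)) G

/-!
A graph with no `K₅` minor on `n ≥ 1` vertices has at most `3n - 3` edges. By induction on `n`:
keep exactly `3n - 2` edges; if some vertex has degree at most `3`, delete it, and if some edge lies
in at most two triangles, contract it. Otherwise every vertex has degree at least `4`, every edge
lies in at least three triangles, and counting gives a vertex `v` of degree `4` or `5`. The
non-edges among the neighbours of `v` then form a matching, so `v` and its neighbours contain a `K₅`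
after at most one contraction.

Hence a planar graph has degree sum at most `6n - 6`. The Caro–Wei bound, applied to the vertices of
degree `d < 12` and combined with `1 / (d + 1) ≥ (12 - d) / 48`, gives an independent set of such
vertices of size at least `(12n - (6n - 6)) / 48 > n / 8`.
-/

open SimpleGraph Finset

local notation "K₅" => (⊤ : SimpleGraph (Fin 5))

universe u

namespace IsMinor

variable {U V W : Type*} {H : SimpleGraph W} {G : SimpleGraph V} {G' : SimpleGraph U}

protected lemma refl (H : SimpleGraph W) : IsMinor H H :=
  ⟨fun w => {w}, fun w => Set.singleton_nonempty w,
    fun w => by rw [induce_singleton_eq_top]; exact connected_top,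
    fun _ _ h => Set.disjoint_singleton.2 h, fun w w' h => ⟨w, rfl, w', rfl, h⟩⟩

lemma trans_isContained (h : IsMinor H G') (hG' : G' ⊑ G) : IsMinor H G := by
  obtain ⟨f, hne, hconn, hdisj, hadj⟩ := h
  obtain ⟨φ⟩ := hG'
  refine ⟨fun w => φ '' f w, fun w => (hne w).image φ, fun w => ?_,
    fun w w' h => Set.disjoint_image_of_injective φ.injective (hdisj h), fun w w' h => ?_⟩
  · let ψ : G'.induce (f w) →g G.induce (φ '' f w) :=
      ⟨fun a => ⟨φ a, a.1, a.2, rfl⟩, fun h => φ.toHom.map_adj h⟩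
    refine (hconn w).map ψ ?_
    rintro ⟨_, a, ha, rfl⟩
    exact ⟨⟨a, ha⟩, rfl⟩
  · obtain ⟨a, ha, b, hb, hab⟩ := hadj w w' h
    exact ⟨φ a, Set.mem_image_of_mem φ ha, φ b, Set.mem_image_of_mem φ hb, φ.toHom.map_adj hab⟩

lemma of_isContained (h : H ⊑ G) : IsMinor H G :=
  (IsMinor.refl H).trans_isContained h

lemma mono (h : IsMinor H G') {G₂ : SimpleGraph U} (hle : G' ≤ G₂) : IsMinor H G₂ :=
  h.trans_isContained (.of_le hle)

end IsMinor

namespace SimpleGraph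

structure IsCliqueQuotient {U V : Type*} (G : SimpleGraph V) (G' : SimpleGraph U) (π : V → U) :
    Prop where
  surjective : Function.Surjective π
  adj_of_eq : ∀ x y, π x = π y → x ≠ y → G.Adj x y
  exists_adj : ∀ a b, G'.Adj a b → ∃ x y, π x = a ∧ π y = b ∧ G.Adj x y

variable {U V : Type*} {G : SimpleGraph V} {G' : SimpleGraph U} {π : V → U}

lemma IsCliqueQuotient.connected_induce_preimage (hπ : IsCliqueQuotient G G' π) {S : Set U}
    (hS : (G'.induce S).Connected) : (G.induce (π ⁻¹' S)).Connected := by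
  have fiber : ∀ x y (hx : π x ∈ S) (hy : π y ∈ S), π x = π y →
      (G.induce (π ⁻¹' S)).Reachable ⟨x, hx⟩ ⟨y, hy⟩ := by
    intro x y hx hy hxy
    by_cases h : x = y
    · subst h; rfl
    · exact Adj.reachable (hπ.adj_of_eq x y hxy h)
  have walk : ∀ (a b : S) (p : (G'.induce S).Walk a b) x y (hx : π x = a) (hy : π y = b),
      (G.induce (π ⁻¹' S)).Reachable ⟨x, by simp [hx]⟩ ⟨y, by simp [hy]⟩ := by
    intro a b p
    induction p with
    | nil => exact fun x y hx hy => fiber x y _ _ (hx.trans hy.symm)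
    | cons hac _ ih =>
      intro x y hx hy
      obtain ⟨x', z', hx', hz', hxz⟩ := hπ.exists_adj _ _ hac
      have hx'S : π x' ∈ S := by simp [hx']
      have hz'S : π z' ∈ S := by simp [hz']
      exact (fiber x x' _ hx'S (hx.trans hx'.symm)).trans
        ((Adj.reachable (G := G.induce (π ⁻¹' S)) (u := ⟨x', hx'S⟩) (v := ⟨z', hz'S⟩) hxz).trans
          (ih z' y hz' hy))
  obtain ⟨⟨a, ha⟩⟩ := hS.nonempty
  obtain ⟨x, rfl⟩ := hπ.surjective a
  refine (connected_iff _).2 ⟨fun ⟨x, hx⟩ ⟨y, hy⟩ => ?_, ⟨⟨x, ha⟩⟩⟩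
  obtain ⟨p⟩ := hS.preconnected ⟨π x, hx⟩ ⟨π y, hy⟩
  exact walk _ _ p x y rfl rfl

lemma _root_.IsMinor.of_isCliqueQuotient {W : Type*} {H : SimpleGraph W} (h : IsMinor H G')
    (hπ : IsCliqueQuotient G G' π) : IsMinor H G := by
  obtain ⟨f, hne, hconn, hdisj, hadj⟩ := h
  refine ⟨fun w => π ⁻¹' f w, fun w => hπ.surjective.nonempty_preimage.2 (hne w),
    fun w => hπ.connected_induce_preimage (hconn w),
    fun w w' h => (hdisj h).preimage π, fun w w' h => ?_⟩
  obtain ⟨a, ha, b, hb, hab⟩ := hadj w w' h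
  obtain ⟨x, y, rfl, rfl, hxy⟩ := hπ.exists_adj a b hab
  exact ⟨x, ha, y, hb, hxy⟩

lemma ncard_edgeSet_eq_card_edgeFinset [Fintype G.edgeSet] : G.edgeSet.ncard = #G.edgeFinset :=
  Set.ncard_eq_toFinset_card' _

lemma ncard_edgeSet_induce_compl_singleton_add_degree [Fintype V] [DecidableRel G.Adj] (x : V) :
    (G.induce {x}ᶜ).edgeSet.ncard + G.degree x = G.edgeSet.ncard := by
  classical
  rw [ncard_edgeSet_eq_card_edgeFinset, ncard_edgeSet_eq_card_edgeFinset,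
    card_edgeFinset_induce_compl_singleton, card_edgeFinset_deleteIncidenceSet, Nat.sub_add_cancel]
  rw [← card_incidenceFinset_eq_degree]
  exact card_le_card (G.incidenceFinset_subset x)

lemma exists_le_ncard_edgeSet_eq [Finite V] {k : ℕ} (hk : k ≤ G.edgeSet.ncard) :
    ∃ G' ≤ G, G'.edgeSet.ncard = k := by
  obtain ⟨s, hs, rfl⟩ := Set.exists_subset_card_eq hk
  refine ⟨G.deleteEdges (G.edgeSet \ s), G.deleteEdges_le _, ?_⟩
  rw [edgeSet_deleteEdges, Set.sdiff_sdiff_cancel_left hs]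

lemma exists_degree_le_of_ncard_edgeSet_lt [Fintype V] [DecidableRel G.Adj] {d : ℕ}
    (h : 2 * G.edgeSet.ncard < (d + 1) * Fintype.card V) : ∃ v, G.degree v ≤ d := by
  classical
  by_contra! hd
  have hsum : ∑ v, (d + 1) ≤ ∑ v, G.degree v := sum_le_sum fun v _ => hd v
  rw [sum_const, card_univ, smul_eq_mul, sum_degrees_eq_twice_card_edges,
    ← ncard_edgeSet_eq_card_edgeFinset] at hsum
  linarith

def joinNeighbors (G : SimpleGraph V) (u v : V) : SimpleGraph V :=
  G ⊔ fromEdgeSet ((fun w => s(v, w)) '' G.neighborSet u)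

/-- Contraction of the edge `uv`: the vertex `u` is deleted and `v` inherits its neighbours. -/
def contractEdge (G : SimpleGraph V) (u v : V) : SimpleGraph ({u}ᶜ : Set V) :=
  (G.joinNeighbors u v).induce {u}ᶜ

variable {u v : V}

lemma neighborSet_joinNeighbors_self (huv : u ≠ v) :
    (G.joinNeighbors u v).neighborSet u = G.neighborSet u := by
  ext z
  simp only [joinNeighbors, mem_neighborSet, sup_adj, fromEdgeSet_adj, Set.mem_image,
    Sym2.eq_iff, or_iff_left_iff_imp]
  rintro ⟨⟨w, huw, ⟨rfl, -⟩ | ⟨-, rfl⟩⟩, -⟩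
  · exact absurd rfl huv
  · exact (G.irrefl huw).elim

lemma ncard_edgeSet_add_card_le_joinNeighbors [Fintype V] [DecidableEq V] [DecidableRel G.Adj] :
    G.edgeSet.ncard + #(G.neighborFinset u \ insert v (G.neighborFinset v)) ≤
      (G.joinNeighbors u v).edgeSet.ncard := by
  set T := G.neighborFinset u \ insert v (G.neighborFinset v)
  have hT : ∀ w ∈ T, G.Adj u w ∧ w ≠ v ∧ ¬ G.Adj v w := fun w hw => by
    simpa [T, not_or] using hw
  have hinj : Set.InjOn (fun w => s(v, w)) T := fun _ _ _ _ h => Sym2.congr_right.1 h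
  have hsub : G.edgeSet ∪ (T.image fun w => s(v, w) : Set (Sym2 V)) ⊆
      (G.joinNeighbors u v).edgeSet := by
    rintro e (he | he)
    · exact edgeSet_mono le_sup_left he
    · obtain ⟨w, hw, rfl⟩ := Finset.mem_image.1 he
      exact Or.inr ⟨⟨w, (hT w hw).1, rfl⟩, (hT w hw).2.1.symm⟩
  have hdisj : Disjoint G.edgeSet (T.image fun w => s(v, w) : Set (Sym2 V)) := by
    rw [Set.disjoint_right]
    rintro e he he'
    obtain ⟨w, hw, rfl⟩ := Finset.mem_image.1 he
    exact (hT w hw).2.2 he'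
  calc G.edgeSet.ncard + #T
      = (G.edgeSet ∪ (T.image fun w => s(v, w) : Set (Sym2 V))).ncard := by
        rw [Set.ncard_union_eq hdisj, Set.ncard_coe_finset, card_image_of_injOn hinj]
    _ ≤ (G.joinNeighbors u v).edgeSet.ncard := Set.ncard_le_ncard hsub

lemma _root_.IsMinor.of_contractEdge {W : Type*} {H : SimpleGraph W} (huv : G.Adj u v)
    (h : IsMinor H (G.contractEdge u v)) : IsMinor H G := by
  classical
  set π : V → ({u}ᶜ : Set V) := fun x => if hx : x = u then ⟨v, huv.ne'⟩ else ⟨x, hx⟩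
  have hπ : ∀ a : ({u}ᶜ : Set V), π a = a := fun a => dif_neg (Set.mem_compl_singleton_iff.1 a.2)
  have hπu : π u = ⟨v, huv.ne'⟩ := dif_pos rfl
  refine h.of_isCliqueQuotient (π := π) ⟨fun a => ⟨a, hπ a⟩, fun x y hxy hne => ?_, ?_⟩
  · replace hxy := congrArg Subtype.val hxy
    by_cases hx : x = u <;> by_cases hy : y = u <;>
      simp only [π, hx, hy, dite_true, dite_false] at hxy
    · exact absurd (hx.trans hy.symm) hne
    · exact hx ▸ hxy ▸ huv
    · exact hy ▸ hxy ▸ huv.symm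
    · exact absurd hxy hne
  · rintro a b (hab | ⟨⟨w, huw, hw⟩, -⟩)
    · exact ⟨a, b, hπ a, hπ b, hab⟩
    · rcases Sym2.eq_iff.1 hw with ⟨hva, rfl⟩ | ⟨hvb, rfl⟩
      · exact ⟨u, b, hπu.trans (Subtype.ext hva), hπ b, huw⟩
      · exact ⟨a, u, hπ a, hπu.trans (Subtype.ext hvb), huw.symm⟩

lemma contractEdge_adj_of_adj {a b : ({u}ᶜ : Set V)} (h : G.Adj a b) :
    (G.contractEdge u v).Adj a b :=
  Or.inl h

lemma contractEdge_adj_of_adj_left {a b : ({u}ᶜ : Set V)} (ha : a.1 = v) (h : G.Adj u b)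
    (hab : (a : V) ≠ b) : (G.contractEdge u v).Adj a b :=
  Or.inr ⟨⟨b, h, by simp [ha]⟩, hab⟩

lemma degree_le_card_inter_add_card_sdiff [Fintype V] [DecidableEq V] [DecidableRel G.Adj] :
    G.degree u ≤ 1 + #(G.neighborFinset u ∩ G.neighborFinset v) +
      #(G.neighborFinset u \ insert v (G.neighborFinset v)) := by
  have hsplit := card_inter_add_card_sdiff (G.neighborFinset u) (insert v (G.neighborFinset v))
  have hins : #(G.neighborFinset u ∩ insert v (G.neighborFinset v)) ≤
      #(insert v (G.neighborFinset u ∩ G.neighborFinset v)) :=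
    card_le_card fun w hw => by simp only [mem_inter, mem_insert] at hw ⊢; tauto
  have := card_insert_le v (G.neighborFinset u ∩ G.neighborFinset v)
  rw [card_neighborFinset_eq_degree] at hsplit
  omega

lemma ncard_edgeSet_le_contractEdge [Fintype V] [DecidableEq V] [DecidableRel G.Adj]
    (huv : G.Adj u v) :
    G.edgeSet.ncard ≤
      (G.contractEdge u v).edgeSet.ncard + 1 + #(G.neighborFinset u ∩ G.neighborFinset v) := by
  classical
  have hdeg : (G.joinNeighbors u v).degree u = G.degree u := by
    rw [← card_neighborSet_eq_degree, ← card_neighborSet_eq_degree]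
    exact Fintype.card_congr (Equiv.setCongr (neighborSet_joinNeighbors_self huv.ne))
  have := ncard_edgeSet_induce_compl_singleton_add_degree (G := G.joinNeighbors u v) u
  have := ncard_edgeSet_add_card_le_joinNeighbors (G := G) (u := u) (v := v)
  have := degree_le_card_inter_add_card_sdiff (G := G) (u := u) (v := v)
  unfold contractEdge
  omega

lemma isMinor_top_of_not_cliqueFree {n : ℕ} (h : ¬ G.CliqueFree n) :
    IsMinor (⊤ : SimpleGraph (Fin n)) G :=
  IsMinor.of_isContained ((not_cliqueFree_iff_top_isContained n).1 h)

lemma isMinor_K5_of_adj {a b c d e : V} (hab : G.Adj a b) (hac : G.Adj a c) (had : G.Adj a d)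
    (hae : G.Adj a e) (hbc : G.Adj b c) (hbd : G.Adj b d) (hbe : G.Adj b e) (hcd : G.Adj c d)
    (hce : G.Adj c e) (hde : G.Adj d e) : IsMinor K₅ G := by
  have hadj : Pairwise fun i j => G.Adj (![a, b, c, d, e] i) (![a, b, c, d, e] j) := by
    intro i j hij
    fin_cases i <;> fin_cases j <;> simp_all [G.adj_comm]
  exact IsMinor.of_isContained
    ⟨⟨⟨![a, b, c, d, e], fun h => hadj h⟩, fun i j h => not_not.1 fun hij => (hadj hij).ne h⟩⟩

/-- Contracting `p` onto `x` turns `v, x, y, q, r` into a `5`-clique. -/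
lemma isMinor_K5_of_adj_six [DecidableEq V] {v x y p q r : V} (hxy : x ≠ y) (hpq : p ≠ q)
    (hpr : p ≠ r) (hv : ∀ w ∈ ({x, y, p, q, r} : Finset V), G.Adj v w)
    (hx : ∀ w ∈ ({p, q, r} : Finset V), G.Adj x w) (hy : ∀ w ∈ ({p, q, r} : Finset V), G.Adj y w)
    (hqr : G.Adj q r) : IsMinor K₅ G := by
  have hpx : G.Adj p x := (hx p (by simp)).symm
  refine IsMinor.of_contractEdge hpx ?_
  refine isMinor_K5_of_adj (a := ⟨v, (hv p (by simp)).ne⟩) (b := ⟨x, hpx.ne'⟩)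
    (c := ⟨y, (hy p (by simp)).ne⟩) (d := ⟨q, hpq.symm⟩) (e := ⟨r, hpr.symm⟩)
    ?_ ?_ ?_ ?_ ?_ ?_ ?_ ?_ ?_ ?_
  · exact contractEdge_adj_of_adj (hv x (by simp))
  · exact contractEdge_adj_of_adj (hv y (by simp))
  · exact contractEdge_adj_of_adj (hv q (by simp))
  · exact contractEdge_adj_of_adj (hv r (by simp))
  · exact contractEdge_adj_of_adj_left rfl (hy p (by simp)).symm hxy
  · exact contractEdge_adj_of_adj (hx q (by simp))
  · exact contractEdge_adj_of_adj (hx r (by simp))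
  · exact contractEdge_adj_of_adj (hy q (by simp))
  · exact contractEdge_adj_of_adj (hy r (by simp))
  · exact contractEdge_adj_of_adj hqr

section Finite

variable [Fintype V] [DecidableEq V] [DecidableRel G.Adj]

lemma card_neighborFinset_sdiff_add_three_le
    (h : 3 ≤ #(G.neighborFinset u ∩ G.neighborFinset v)) :
    #(G.neighborFinset v \ G.neighborFinset u) + 3 ≤ G.degree v := by
  have := card_sdiff_add_card_inter (G.neighborFinset v) (G.neighborFinset u)
  rw [inter_comm, card_neighborFinset_eq_degree] at this
  omega

lemma adj_of_not_adj_of_degree_le_five {w z : V} (h5 : G.degree v ≤ 5)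
    (hcommon : 3 ≤ #(G.neighborFinset u ∩ G.neighborFinset v)) (hu : u ∈ G.neighborFinset v)
    (hw : w ∈ G.neighborFinset v) (hz : z ∈ G.neighborFinset v) (huw : u ≠ w) (huz : u ≠ z)
    (hwz : w ≠ z) (hnuw : ¬ G.Adj u w) : G.Adj u z := by
  by_contra hnuz
  have hsub : {u, w, z} ⊆ G.neighborFinset v \ G.neighborFinset u := by
    simp_all [insert_subset_iff]
  have := card_le_card hsub
  rw [card_insert_of_notMem (by simp [huw, huz]), card_pair hwz] at this
  have := card_neighborFinset_sdiff_add_three_le hcommon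
  omega

lemma isMinor_K5_of_isClique_neighborFinset (h4 : 4 ≤ G.degree v)
    (h : G.IsClique (G.neighborFinset v : Set V)) : IsMinor K₅ G := by
  have hins : G.IsClique (insert v (G.neighborFinset v) : Finset V) := by
    rw [coe_insert, isClique_insert]
    exact ⟨h, fun b hb _ => (mem_neighborFinset G v b).1 hb⟩
  have hcard : 5 ≤ #(insert v (G.neighborFinset v)) := by
    rw [card_insert_of_notMem (by simp), card_neighborFinset_eq_degree]
    omega
  obtain ⟨t, ht, htcard⟩ := exists_subset_card_eq hcard
  have ht5 : G.IsNClique 5 t := ⟨hins.subset (by exact_mod_cast ht), htcard⟩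
  exact isMinor_top_of_not_cliqueFree ht5.not_cliqueFree

lemma isMinor_K5_of_not_adj_of_degree_le_five (h5 : G.degree v ≤ 5)
    (hcommon : ∀ u ∈ G.neighborFinset v, 3 ≤ #(G.neighborFinset u ∩ G.neighborFinset v))
    {x y : V} (hx : x ∈ G.neighborFinset v) (hy : y ∈ G.neighborFinset v) (hxy : x ≠ y)
    (hnxy : ¬ G.Adj x y) : IsMinor K₅ G := by
  set N := G.neighborFinset v
  have hN5 : #N = 5 := by
    have h2 := card_le_card (show {x, y} ⊆ N \ G.neighborFinset x by simp_all [insert_subset_iff])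
    have h3 : #(N \ G.neighborFinset x) + 3 ≤ G.degree v :=
      card_neighborFinset_sdiff_add_three_le (hcommon x hx)
    rw [card_pair hxy] at h2
    rw [card_neighborFinset_eq_degree]
    omega
  set M := (N.erase x).erase y
  have hMN : ∀ w ∈ M, w ∈ N ∧ w ≠ x ∧ w ≠ y := fun w hw => by
    simp only [M, mem_erase] at hw
    exact ⟨hw.2.2, hw.2.1, hw.1⟩
  have hxM : ∀ w ∈ M, G.Adj x w := fun w hw => adj_of_not_adj_of_degree_le_five h5 (hcommon x hx)
    hx hy (hMN w hw).1 hxy (hMN w hw).2.1.symm (hMN w hw).2.2.symm hnxy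
  have hyM : ∀ w ∈ M, G.Adj y w := fun w hw => adj_of_not_adj_of_degree_le_five h5 (hcommon y hy)
    hy hx (hMN w hw).1 hxy.symm (hMN w hw).2.2.symm (hMN w hw).2.1.symm fun h => hnxy h.symm
  have key : ∀ p q r, ({p, q, r} : Finset V) = M → p ≠ q → p ≠ r → G.Adj q r →
      IsMinor K₅ G := by
    intro p q r hM hpq hpr hqr
    refine isMinor_K5_of_adj_six (v := v) hxy hpq hpr (fun w hw => ?_)
      (fun w hw => hxM w (hM ▸ hw)) (fun w hw => hyM w (hM ▸ hw)) hqr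
    rw [insert_eq x, insert_eq y, hM] at hw
    simp only [mem_union, mem_singleton] at hw
    rcases hw with rfl | rfl | hw
    exacts [(mem_neighborFinset G v w).1 hx, (mem_neighborFinset G v w).1 hy,
      (mem_neighborFinset G v w).1 (hMN w hw).1]
  have hM : #M = 3 := by
    rw [card_erase_of_mem (mem_erase.2 ⟨hxy.symm, hy⟩), card_erase_of_mem hx, hN5]
  obtain ⟨a, b, c, hab, hac, hbc, hMabc⟩ := card_eq_three.1 hM
  by_cases hbc' : G.Adj b c
  · exact key a b c hMabc.symm hab hac hbc'
  · have hN : ∀ w ∈ ({a, b, c} : Finset V), w ∈ N := fun w hw => (hMN w (hMabc ▸ hw)).1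
    have hca : G.Adj c a := adj_of_not_adj_of_degree_le_five h5 (hcommon c (hN c (by simp)))
      (hN c (by simp)) (hN b (by simp)) (hN a (by simp)) hbc.symm hac.symm hab.symm
      fun h => hbc' h.symm
    exact key b a c (by rw [hMabc, insert_comm]) hab.symm hbc hca.symm

lemma isMinor_K5_of_degree_le_five (h4 : 4 ≤ G.degree v) (h5 : G.degree v ≤ 5)
    (hcommon : ∀ u, G.Adj v u → 3 ≤ #(G.neighborFinset u ∩ G.neighborFinset v)) :
    IsMinor K₅ G := by
  by_cases hclique : G.IsClique (G.neighborFinset v : Set V)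
  · exact isMinor_K5_of_isClique_neighborFinset h4 hclique
  obtain ⟨x, hx, y, hy, hxy, hnxy⟩ :
      ∃ x ∈ G.neighborFinset v, ∃ y ∈ G.neighborFinset v, x ≠ y ∧ ¬ G.Adj x y := by
    simpa [IsClique, Set.Pairwise] using hclique
  exact isMinor_K5_of_not_adj_of_degree_le_five h5
    (fun u hu => hcommon u ((mem_neighborFinset G v u).1 hu)) hx hy hxy hnxy

lemma sum_inter_insert_neighborFinset_inv_le_one {s : Finset V} {c : V → ℕ}
    (hmin : ∀ w ∈ s, c v ≤ c w) (hcv : #(G.neighborFinset v ∩ s) ≤ c v) :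
    ∑ w ∈ s ∩ insert v (G.neighborFinset v), ((c w : ℚ) + 1)⁻¹ ≤ 1 := by
  have hcard : #(s ∩ insert v (G.neighborFinset v)) ≤ c v + 1 :=
    calc #(s ∩ insert v (G.neighborFinset v))
        ≤ #(insert v (G.neighborFinset v ∩ s)) := card_le_card fun w hw => by
          simp only [mem_inter, mem_insert] at hw ⊢
          tauto
      _ ≤ c v + 1 := (card_insert_le _ _).trans (Nat.succ_le_succ hcv)
  calc ∑ w ∈ s ∩ insert v (G.neighborFinset v), ((c w : ℚ) + 1)⁻¹
      ≤ #(s ∩ insert v (G.neighborFinset v)) • ((c v : ℚ) + 1)⁻¹ :=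
        sum_le_card_nsmul _ _ _ fun w hw => inv_anti₀ (by positivity)
          (by exact_mod_cast Nat.succ_le_succ (hmin w (mem_inter.1 hw).1))
    _ ≤ ((c v : ℚ) + 1) * ((c v : ℚ) + 1)⁻¹ := by
        rw [nsmul_eq_mul]
        gcongr
        exact_mod_cast hcard
    _ = 1 := mul_inv_cancel₀ (by positivity)

/-- Caro–Wei: greedily pick a vertex minimising `c` and discard its closed neighbourhood. -/
theorem exists_isIndepSet_sum_inv_le_card (s : Finset V) (c : V → ℕ)
    (hc : ∀ v ∈ s, #(G.neighborFinset v ∩ s) ≤ c v) :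
    ∃ I ⊆ s, G.IsIndepSet (I : Set V) ∧ ∑ v ∈ s, ((c v : ℚ) + 1)⁻¹ ≤ #I := by
  induction s using Finset.strongInduction with
  | H s ih =>
  rcases s.eq_empty_or_nonempty with rfl | hs
  · exact ⟨∅, empty_subset _, by simp, by simp⟩
  obtain ⟨v, hv, hmin⟩ := s.exists_min_image c hs
  set B := insert v (G.neighborFinset v)
  have hsub : s \ B ⊂ s := sdiff_subset.ssubset_of_not_subset fun h =>
    (mem_sdiff.1 (h hv)).2 (mem_insert_self _ _)
  obtain ⟨I, hIs, hI, hsum⟩ := ih (s \ B) hsub fun w hw =>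
    (card_le_card (inter_subset_inter_left sdiff_subset)).trans (hc w (mem_sdiff.1 hw).1)
  have hvI : v ∉ I := fun h => (mem_sdiff.1 (hIs h)).2 (mem_insert_self _ _)
  have hclosed := sum_inter_insert_neighborFinset_inv_le_one (G := G) hmin (hc v hv)
  refine ⟨insert v I, insert_subset hv (hIs.trans sdiff_subset), ?_, ?_⟩
  · rw [coe_insert, IsIndepSet, Set.pairwise_insert]
    refine ⟨hI, fun w hw _ => ?_⟩
    have hwB := (mem_sdiff.1 (hIs hw)).2
    simp only [B, mem_insert, mem_neighborFinset, not_or] at hwB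
    exact ⟨hwB.2, fun h => hwB.2 h.symm⟩
  · rw [← sum_inter_add_sum_sdiff s B, card_insert_of_notMem hvI]
    push_cast
    linarith

end Finite

theorem isMinor_K5_of_three_mul_card_le {V : Type u} [Fintype V] [Nonempty V]
    (G : SimpleGraph V) (hE : 3 * Fintype.card V ≤ G.edgeSet.ncard + 2) : IsMinor K₅ G := by
  suffices ∀ n, ∀ {V : Type u} [Fintype V] (G : SimpleGraph V), Fintype.card V = n → 0 < n →
      3 * n ≤ G.edgeSet.ncard + 2 → IsMinor K₅ G from this _ G rfl Fintype.card_pos hE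
  intro n
  induction n with
  | zero => exact fun _ _ h => absurd h (lt_irrefl 0)
  | succ n ih =>
  intro V _ G hV _ hE
  classical
  obtain ⟨G, hle, hG⟩ := exists_le_ncard_edgeSet_eq (G := G) (k := 3 * (n + 1) - 2) (by omega)
  refine IsMinor.mono ?_ hle
  have hn : 6 ≤ n := by
    have hchoose := card_edgeFinset_le_card_choose_two (G := G)
    rw [← ncard_edgeSet_eq_card_edgeFinset, hG, hV] at hchoose
    by_contra! hn
    interval_cases n <;> simp [Nat.choose] at hchoose
  have hcard : ∀ x : V, Fintype.card ({x}ᶜ : Set V) = n := fun x => by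
    rw [Fintype.card_compl_set, Set.card_singleton, hV, Nat.add_sub_cancel]
  by_cases hlow : ∃ x, G.degree x ≤ 3
  · obtain ⟨x, hx⟩ := hlow
    have := ncard_edgeSet_induce_compl_singleton_add_degree (G := G) x
    exact (ih (G.induce {x}ᶜ) (hcard x) (by omega) (by omega)).trans_isContained
      ⟨Copy.induce G _⟩
  by_cases hsparse : ∃ u v, G.Adj u v ∧ #(G.neighborFinset u ∩ G.neighborFinset v) ≤ 2
  · obtain ⟨u, v, huv, hc⟩ := hsparse
    have := ncard_edgeSet_le_contractEdge huv
    exact IsMinor.of_contractEdge huv (ih _ (hcard u) (by omega) (by omega))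
  push Not at hlow hsparse
  obtain ⟨v, hv⟩ := exists_degree_le_of_ncard_edgeSet_lt (G := G) (d := 5) (by omega)
  exact isMinor_K5_of_degree_le_five (hlow v) hv fun u hu => hsparse u v hu.symm

end SimpleGraph

lemma twelve_sub_div_le_inv (d : ℕ) :
    ((12 : ℚ) - d) / 48 ≤ if d < 12 then ((d : ℚ) + 1)⁻¹ else 0 := by
  split_ifs with hd
  · interval_cases d <;> norm_num
  · have : (12 : ℚ) ≤ d := by exact_mod_cast not_lt.1 hd
    linarith

/-- every planar graph on `n ≥ 1` vertices contains an independent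
set `I` of size at least `n/8` all of whose vertices have degree less than 12. -/
theorem planar_independent_low_degree {V : Type*} [Fintype V] [Nonempty V]
    (G : SimpleGraph V) [DecidableRel G.Adj] (hG : IsPlanar G) :
    ∃ I : Finset V,
      (∀ u ∈ I, ∀ v ∈ I, ¬ G.Adj u v) ∧
      (∀ v ∈ I, G.degree v < 12) ∧
      Fintype.card V ≤ 8 * I.card := by
  classical
  have hE : G.edgeSet.ncard + 3 ≤ 3 * Fintype.card V := by
    by_contra! h
    exact hG.1 (G.isMinor_K5_of_three_mul_card_le (by omega))
  obtain ⟨I, hIL, hI, hsum⟩ := G.exists_isIndepSet_sum_inv_le_card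
    (univ.filter fun v => G.degree v < 12) (G.degree ·) fun v _ =>
      (card_le_card inter_subset_left).trans_eq (G.card_neighborFinset_eq_degree v)
  refine ⟨I, fun u hu v hv huv => hI hu hv huv.ne huv, fun v hv => (mem_filter.1 (hIL hv)).2, ?_⟩
  have hdeg : ∑ v, (G.degree v : ℚ) = 2 * G.edgeSet.ncard := by
    rw [G.ncard_edgeSet_eq_card_edgeFinset]
    exact_mod_cast G.sum_degrees_eq_twice_card_edges
  have hweight : ∑ v, ((12 : ℚ) - G.degree v) / 48 ≤ #I := by
    refine le_trans ?_ hsum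
    rw [sum_filter]
    exact sum_le_sum fun v _ => twelve_sub_div_le_inv (G.degree v)
  rw [← sum_div, sum_sub_distrib, hdeg, div_le_iff₀ (by norm_num)] at hweight
  simp only [sum_const, card_univ, nsmul_eq_mul] at hweight
  have hE' : (G.edgeSet.ncard : ℚ) + 3 ≤ 3 * Fintype.card V := by exact_mod_cast hE
  have : (Fintype.card V : ℚ) ≤ 8 * #I := by linarith
  exact_mod_cast this
end

section
/- Let G be a graph with vertex set V and let c be a coloring of V such that there is a set S ⊆ V with the following properties: the colors used on S are all strictly greater than the colors used on V∖S, the restriction of c to each connected component of G∖S is an l-vertex ranking of that component, and any two vertices of S with equal color are at distance greater than l in G. Then c is an l-vertex ranking of G. -/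
private def inclHom {V : Type*} (G : SimpleGraph V) (s : Set V) : G.induce s →g G where
  toFun := Subtype.val
  map_rel' := fun h => h

private lemma lift_walk {V : Type*} {G : SimpleGraph V} {s : Set V} :
    ∀ {u v : V} (p : G.Walk u v) (hs : ∀ w ∈ p.support, w ∈ s),
      ∃ q : (G.induce s).Walk ⟨u, hs u p.start_mem_support⟩ ⟨v, hs v p.end_mem_support⟩,
        q.map (inclHom G s) = p := by
  intro u v p
  induction p with
  | nil => intro hs; exact ⟨.nil, rfl⟩
  | @cons a b w h p ih =>
    intro hs
    obtain ⟨q, hq⟩ := ih (fun x hx => hs x (by simp [hx]))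
    refine ⟨.cons (by exact h : (G.induce s).Adj ⟨a, _⟩ ⟨b, _⟩) q, ?_⟩
    simp [inclHom]
    exact congrArg (SimpleGraph.Walk.cons h) hq

/-- An `l`-vertex ranking: whenever `c u = c v` with `u ≠ v`, every simple path of
length at most `l` from `u` to `v` contains a vertex of strictly higher color. -/
def IsLVRColoring {V : Type*} (G : SimpleGraph V) (l : ℕ) (c : V → ℕ) : Prop :=
  ∀ u v, c u = c v → u ≠ v → ∀ p : G.Walk u v, p.IsPath → p.length ≤ l →
    ∃ w ∈ p.support, c u < c w

/-- if colors on `S` are strictly greater than colors on `V ∖ S`,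
the restriction of `c` to `G ∖ S` (hence to each of its connected components) is an
`l`-vertex ranking, and equally-colored vertices of `S` are at distance greater
than `l` in `G`, then `c` is an `l`-vertex ranking of `G`. -/
theorem lvr_from_separator {V : Type*} (G : SimpleGraph V) (l : ℕ)
    (S : Set V) (c : V → ℕ)
    (h1 : ∀ s ∈ S, ∀ v ∉ S, c v < c s)
    (h2 : IsLVRColoring (G.induce Sᶜ) l (fun v => c v.val))
    (h3 : ∀ u ∈ S, ∀ v ∈ S, u ≠ v → c u = c v → ∀ p : G.Walk u v, l < p.length) :
    IsLVRColoring G l c := by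
  intro u v hcuv hne p hp hl
  by_cases hu : u ∈ S
  · by_cases hv : v ∈ S
    · exact absurd hl (not_le.mpr (h3 u hu v hv hne hcuv p))
    · exact absurd hcuv.symm (ne_of_lt (h1 u hu v hv))
  · by_cases hv : v ∈ S
    · exact absurd hcuv (ne_of_lt (h1 v hv u hu))
    · by_cases hmeet : ∃ w ∈ p.support, w ∈ S
      · obtain ⟨w, hw, hwS⟩ := hmeet
        exact ⟨w, hw, h1 w hwS u hu⟩
      · push_neg at hmeet
        obtain ⟨q, hq⟩ := lift_walk (s := Sᶜ) p hmeet
        have hqpath : q.IsPath := SimpleGraph.Walk.IsPath.of_map (f := inclHom G Sᶜ) (by rw [hq]; exact hp)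
        have hqlen : q.length ≤ l := by
          rw [← SimpleGraph.Walk.length_map (f := inclHom G Sᶜ), hq]; exact hl
        obtain ⟨w, hw, hcw⟩ := h2 ⟨u, _⟩ ⟨v, _⟩ hcuv (by simpa using hne) q hqpath hqlen
        refine ⟨w.val, ?_, hcw⟩
        have := SimpleGraph.Walk.support_map (f := inclHom G Sᶜ) (p := q)
        rw [hq] at this
        exact (congrArg (fun L => w.val ∈ L) this).mpr (List.mem_map_of_mem hw)
end
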